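/- Let c, x, y, σ ∈ ℂ with Re c > 0, Re x > 0, Re y > 0, and |Re σ| < (Re c)/2. Then the function τ ↦ Γ(c/2 − σ − iτ) Γ(c/2 + σ + iτ) U(c/2 − σ − iτ, c, x) U(c/2 + σ + iτ, c, y) is Lebesgue integrable on ℝ; equivalently, τ ↦ (∫₀^∞ e^{−xt} t^{c/2−σ−iτ−1} (1+t)^{c/2+σ+iτ−1} dt) (∫₀^∞ e^{−yt} t^{c/2+σ+iτ−1} (1+t)^{c/2−σ−iτ−1} dt) is Lebesgue integrable on ℝ. -/

import Mathlib

open MeasureTheory Set Filter Complex Real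
open scoped Topology

noncomputable def Fn (a b z : ℂ) (t : ℝ) : ℂ :=
  Complex.exp (-z * t) * (t : ℂ) ^ (a - 1) * ((1 : ℂ) + t) ^ (b - a - 1)

noncomputable def rB (α β r : ℝ) (t : ℝ) : ℝ :=
  Real.exp (-r * t) * t ^ (α - 1) * (1 + t) ^ β

lemma norm_Fn (a b z : ℂ) {t : ℝ} (ht : 0 < t) :
    ‖Fn a b z t‖ = rB a.re (b.re - a.re - 1) z.re t := by
  have h1t : (0:ℝ) < 1 + t := by linarith
  have e2 : ((1:ℂ) + t) = ((1 + t : ℝ) : ℂ) := by push_cast; ring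
  rw [Fn, rB, norm_mul, norm_mul, Complex.norm_exp, e2,
    Complex.norm_cpow_eq_rpow_re_of_pos ht, Complex.norm_cpow_eq_rpow_re_of_pos h1t]
  congr 2
  · congr 1
    simp [Complex.mul_re]

lemma rB_integrableOn {α β r : ℝ} (hα : 0 < α) (hr : 0 < r) :
    IntegrableOn (rB α β r) (Ioi 0) := by
  have meas : AEStronglyMeasurable (rB α β r) (volume.restrict (Ioi (0:ℝ))) := by
    apply ContinuousOn.aestronglyMeasurable _ measurableSet_Ioi
    intro t ht
    have h1t : (0:ℝ) < 1 + t := by have := ht.out; linarith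
    exact (((Real.continuous_exp.comp (continuous_const.mul continuous_id)).continuousAt.continuousWithinAt).mul
      ((Real.continuousAt_rpow_const t (α-1) (Or.inl (ne_of_gt ht.out))).continuousWithinAt)).mul
      (((continuous_const.add continuous_id).continuousAt.rpow_const
        (Or.inl (ne_of_gt h1t))).continuousWithinAt)
  have base : ∀ s : ℝ, -1 < s → IntegrableOn (fun t : ℝ => t ^ s * Real.exp (-r * t)) (Ioi 0) := by
    intro s hs
    have := integrableOn_rpow_mul_exp_neg_mul_rpow hs (zero_lt_one (α := ℝ)) hr
    refine this.congr_fun (fun t ht => by dsimp only; rw [Real.rpow_one]) measurableSet_Ioi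
  rcases le_or_gt β 0 with hβ | hβ
  · refine Integrable.mono' (base (α-1) (by linarith)) meas ?_
    filter_upwards [ae_restrict_mem measurableSet_Ioi] with t ht
    have ht0 := ht.out
    have h1t : (1:ℝ) ≤ 1 + t := by linarith
    rw [rB, Real.norm_eq_abs, _root_.abs_of_nonneg (by positivity)]
    calc Real.exp (-r*t) * t ^ (α-1) * (1+t) ^ β
        ≤ Real.exp (-r*t) * t ^ (α-1) * 1 := by
          gcongr
          exact Real.rpow_le_one_of_one_le_of_nonpos h1t hβ
      _ = t ^ (α-1) * Real.exp (-r*t) := by ring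
  · have int2 : IntegrableOn (fun t : ℝ =>
        (2:ℝ) ^ β * (t ^ (α-1+β) * Real.exp (-r*t)) + (2:ℝ) ^ β * (t ^ (α-1) * Real.exp (-r*t)))
        (Ioi 0) := ((base (α-1+β) (by linarith)).const_mul _).add ((base (α-1) (by linarith)).const_mul _)
    refine Integrable.mono' int2 meas ?_
    filter_upwards [ae_restrict_mem measurableSet_Ioi] with t ht
    have ht0 := ht.out
    have h1t : (0:ℝ) < 1 + t := by linarith
    rw [rB, Real.norm_eq_abs, _root_.abs_of_nonneg (by positivity)]
    have key : (1+t) ^ β ≤ (2:ℝ) ^ β * (t ^ β + 1) := by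
      rcases le_total t 1 with h | h
      · have : (1+t) ^ β ≤ (2:ℝ) ^ β := by
          apply Real.rpow_le_rpow (by linarith) (by linarith) hβ.le
        calc (1+t) ^ β ≤ (2:ℝ) ^ β := this
          _ = (2:ℝ) ^ β * 1 := by ring
          _ ≤ (2:ℝ) ^ β * (t ^ β + 1) := by
              have : (0:ℝ) ≤ t ^ β := Real.rpow_nonneg ht0.le β
              gcongr; linarith
      · have h2 : (1+t) ^ β ≤ (2*t) ^ β := by
          apply Real.rpow_le_rpow (by linarith) (by linarith) hβ.le
        calc (1+t) ^ β ≤ (2*t) ^ β := h2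
          _ = (2:ℝ) ^ β * t ^ β := Real.mul_rpow (by norm_num) ht0.le
          _ ≤ (2:ℝ) ^ β * (t ^ β + 1) := by
              have : (0:ℝ) < (2:ℝ) ^ β := Real.rpow_pos_of_pos (by norm_num) β
              nlinarith
    calc Real.exp (-r*t) * t ^ (α-1) * (1+t) ^ β
        ≤ Real.exp (-r*t) * t ^ (α-1) * ((2:ℝ) ^ β * (t ^ β + 1)) := by
          gcongr
      _ = (2:ℝ) ^ β * (t ^ (α-1) * t ^ β * Real.exp (-r*t)) + (2:ℝ) ^ β * (t ^ (α-1) * Real.exp (-r*t)) := by ring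
      _ = (2:ℝ) ^ β * (t ^ (α-1+β) * Real.exp (-r*t)) + (2:ℝ) ^ β * (t ^ (α-1) * Real.exp (-r*t)) := by
          rw [← Real.rpow_add ht0]

lemma Fn_measurable (a b z : ℂ) : Measurable (Fn a b z) := by
  refine Measurable.mul (Measurable.mul ?_ ?_) ?_
  · exact Complex.measurable_exp.comp (measurable_const.mul Complex.measurable_ofReal)
  · exact Complex.measurable_ofReal.pow measurable_const
  · exact (measurable_const.add Complex.measurable_ofReal).pow measurable_const

lemma Fn_integrableOn {a z : ℂ} (b : ℂ) (ha : 0 < a.re) (hz : 0 < z.re) :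
    IntegrableOn (Fn a b z) (Ioi 0) := by
  refine Integrable.mono' (rB_integrableOn (β := b.re - a.re - 1) ha hz) (Fn_measurable a b z).aestronglyMeasurable ?_
  filter_upwards [ae_restrict_mem measurableSet_Ioi] with t ht
  exact le_of_eq (norm_Fn a b z ht.out)

lemma J_norm_le {a z : ℂ} (b : ℂ) (ha : 0 < a.re) (hz : 0 < z.re) :
    ‖∫ t in Ioi (0:ℝ), Fn a b z t‖ ≤ ∫ t in Ioi (0:ℝ), rB a.re (b.re - a.re - 1) z.re t := by
  refine norm_integral_le_of_norm_le (rB_integrableOn ha hz) ?_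
  filter_upwards [ae_restrict_mem measurableSet_Ioi] with t ht
  exact le_of_eq (norm_Fn a b z ht.out)

lemma Fn_mul_t {a b z : ℂ} {t : ℝ} (ht : 0 < t) :
    Fn a b z t * t = Fn (a+1) (b+1) z t := by
  have htne : (t:ℂ) ≠ 0 := Complex.ofReal_ne_zero.mpr ht.ne'
  rw [Fn, Fn]
  have h1 : (t:ℂ) ^ (a + 1 - 1) = (t:ℂ) ^ (a-1) * t := by
    rw [show a + 1 - 1 = (a-1) + 1 by ring, Complex.cpow_add _ _ htne, Complex.cpow_one]
  have h2 : (b + 1 - (a + 1) - 1 : ℂ) = b - a - 1 := by ring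
  rw [h1, h2]; ring

lemma Fn_mul_t_mul {a b z : ℂ} {t : ℝ} (ht : 0 < t) :
    Fn a b z t * (t * ((1:ℂ) + t)) = Fn (a+1) (b+2) z t := by
  have htne : (t:ℂ) ≠ 0 := Complex.ofReal_ne_zero.mpr ht.ne'
  have h1tne : ((1:ℂ) + t) ≠ 0 := by
    intro h
    have : ((1:ℂ)+t).re = 0 := by rw [h]; simp
    simp only [Complex.add_re, Complex.one_re, Complex.ofReal_re] at this
    linarith
  rw [Fn, Fn]
  have h1 : (t:ℂ) ^ (a + 1 - 1) = (t:ℂ) ^ (a-1) * t := by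
    rw [show a + 1 - 1 = (a-1) + 1 by ring, Complex.cpow_add _ _ htne, Complex.cpow_one]
  have h2 : ((1:ℂ)+t) ^ (b + 2 - (a + 1) - 1) = ((1:ℂ)+t) ^ (b-a-1) * ((1:ℂ)+t) := by
    rw [show b + 2 - (a+1) - 1 = (b-a-1) + 1 by ring, Complex.cpow_add _ _ h1tne,
      Complex.cpow_one]
  rw [h1, h2]; ring

lemma w_hasDerivAt (a b z : ℂ) {t : ℝ} (ht : 0 < t) :
    HasDerivAt (Fn (a+1) (b+2) z)
      (Fn a b z t * (a + b * t - z * (t * ((1:ℂ) + t)))) t := by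
  have htne : (t:ℂ) ≠ 0 := Complex.ofReal_ne_zero.mpr ht.ne'
  have h1 : HasDerivAt (fun s : ℝ => Complex.exp (-z * s)) (-z * Complex.exp (-z * t)) t := by
    have : HasDerivAt (fun u : ℂ => Complex.exp (-z * u)) (-z * Complex.exp (-z * t)) (t : ℂ) := by
      simpa [Function.comp_def, mul_comm] using (Complex.hasDerivAt_exp (-z * t)).comp (t:ℂ)
        ((hasDerivAt_id (t:ℂ)).const_mul (-z))
    exact this.comp_ofReal
  have h2 : HasDerivAt (fun s : ℝ => (s:ℂ) ^ a) (a * (t:ℂ) ^ (a-1)) t := by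
    have := (hasDerivAt_id (t:ℂ)).cpow_const (c := a)
      (Complex.ofReal_mem_slitPlane.mpr ht)
    simpa using this.comp_ofReal
  have h3 : HasDerivAt (fun s : ℝ => ((1:ℂ) + s) ^ (b - a))
      ((b - a) * ((1:ℂ) + t) ^ (b - a - 1)) t := by
    have hd : HasDerivAt (fun u : ℂ => ((1:ℂ) + u) ^ (b - a))
        ((b - a) * ((1:ℂ) + t) ^ (b - a - 1) * 1) (t:ℂ) := by
      refine HasDerivAt.cpow_const ?_ ?_
      · simpa using (hasDerivAt_id (t:ℂ)).const_add 1
      · refine Complex.mem_slitPlane_iff.mpr (Or.inl ?_)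
        simp only [Complex.add_re, Complex.one_re, Complex.ofReal_re]
        linarith
    simpa using hd.comp_ofReal
  have hfun : Fn (a+1) (b+2) z = fun s : ℝ =>
      Complex.exp (-z * s) * (s:ℂ) ^ a * ((1:ℂ) + s) ^ (b - a) := by
    funext s
    rw [Fn, show a + 1 - 1 = a from by ring, show b + 2 - (a+1) - 1 = b - a from by ring]
  rw [hfun]
  have hD := (h1.mul h2).mul h3
  refine hD.congr_deriv ?_
  have e1 : (t:ℂ) ^ (a-1) * (t:ℂ) = (t:ℂ) ^ a := by
    conv_rhs => rw [show a = (a-1)+1 from by ring]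
    rw [Complex.cpow_add _ _ htne, Complex.cpow_one]
  have e2 : ((1:ℂ)+t) ^ (b-a-1) * ((1:ℂ)+t) = ((1:ℂ)+t) ^ (b-a) := by
    have h1tne : ((1:ℂ) + t) ≠ 0 := by
      intro h
      have : ((1:ℂ)+t).re = 0 := by rw [h]; simp
      simp only [Complex.add_re, Complex.one_re, Complex.ofReal_re] at this
      linarith
    conv_rhs => rw [show b - a = (b-a-1)+1 from by ring]
    rw [Complex.cpow_add _ _ h1tne, Complex.cpow_one]
  simp only [Pi.mul_apply]
  rw [Fn, ← e1, ← e2]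
  ring

lemma rB_tendsto_atTop (α β : ℝ) {r : ℝ} (hr : 0 < r) :
    Tendsto (rB α β r) atTop (𝓝 0) := by
  have h1 := tendsto_rpow_mul_exp_neg_mul_atTop_nhds_zero (α-1) (r/2) (by linarith)
  have h2 := (tendsto_rpow_mul_exp_neg_mul_atTop_nhds_zero β (r/2) (by linarith)).comp
    (tendsto_atTop_add_const_left atTop (1:ℝ) tendsto_id)
  have h3 := (h1.mul h2).mul_const (Real.exp (r/2))
  rw [zero_mul, zero_mul] at h3
  refine h3.congr fun t => ?_
  simp only [Function.comp_def, id_eq, rB]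
  have he : Real.exp (-(r/2)*t) * Real.exp (-(r/2)*(1+t)) * Real.exp (r/2)
      = Real.exp (-r * t) := by
    rw [← Real.exp_add, ← Real.exp_add]; congr 1; ring
  rw [← he]; ring

lemma rB_tendsto_zero {α : ℝ} (β : ℝ) {r : ℝ} (hα : 1 < α) :
    Tendsto (rB α β r) (𝓝[>] (0:ℝ)) (𝓝 0) := by
  have hc : ContinuousAt (rB α β r) 0 := by
    refine ContinuousAt.mul (ContinuousAt.mul ?_ ?_) ?_
    · exact (Real.continuous_exp.comp (continuous_const.mul continuous_id)).continuousAt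
    · exact Real.continuousAt_rpow_const 0 (α-1) (Or.inr (by linarith))
    · exact (continuousAt_const.add continuousAt_id).rpow_const (Or.inl (by norm_num))
  have h0 : rB α β r 0 = 0 := by
    rw [rB, Real.zero_rpow (by linarith : α - 1 ≠ 0)]
    ring
  simpa [h0] using hc.tendsto.mono_left nhdsWithin_le_nhds

lemma w_tendsto_atTop (a b : ℂ) {z : ℂ} (hz : 0 < z.re) :
    Tendsto (Fn (a+1) (b+2) z) atTop (𝓝 0) := by
  refine squeeze_zero_norm' ?_ (rB_tendsto_atTop ((a+1).re) ((b+2).re - (a+1).re - 1) hz)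
  filter_upwards [eventually_gt_atTop (0:ℝ)] with t ht
  exact le_of_eq (norm_Fn _ _ _ ht)

lemma w_tendsto_zero (a b : ℂ) (ha : 0 < a.re) (z : ℂ) :
    Tendsto (Fn (a+1) (b+2) z) (𝓝[>] (0:ℝ)) (𝓝 0) := by
  refine squeeze_zero_norm' ?_ (rB_tendsto_zero (α := (a+1).re) (r := z.re)
    ((b+2).re - (a+1).re - 1)
    (by simp only [Complex.add_re, Complex.one_re]; linarith))
  filter_upwards [self_mem_nhdsWithin] with t ht
  exact le_of_eq (norm_Fn _ _ _ ht)

lemma Fn_w_zero {a : ℂ} (b z : ℂ) (ha : 0 < a.re) : Fn (a+1) (b+2) z 0 = 0 := by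
  have : (a + 1 - 1 : ℂ) ≠ 0 := by
    intro h
    have : (a + 1 - 1 : ℂ).re = 0 := by rw [h]; simp
    simp only [Complex.sub_re, Complex.add_re, Complex.one_re] at this
    linarith
  have ha0 : a ≠ 0 := by
    intro h; rw [h] at ha; simp at ha
  simp [Fn, Complex.zero_cpow this, ha0]

lemma key_integrable {a z : ℂ} (b : ℂ) (ha : 0 < a.re) (hz : 0 < z.re) :
    IntegrableOn (fun t : ℝ => Fn a b z t * (a + b * t - z * (t * ((1:ℂ) + t)))) (Ioi 0) := by
  have ha1 : 0 < (a+1).re := by simp only [Complex.add_re, Complex.one_re]; linarith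
  have hI : IntegrableOn (fun t : ℝ => a * Fn a b z t + b * Fn (a+1) (b+1) z t
      - z * Fn (a+1) (b+2) z t) (Ioi 0) :=
    (((Fn_integrableOn b ha hz).const_mul a).add
      ((Fn_integrableOn (b+1) ha1 hz).const_mul b)).sub
      ((Fn_integrableOn (b+2) ha1 hz).const_mul z)
  refine hI.congr_fun (fun t ht => ?_) measurableSet_Ioi
  dsimp only
  rw [← Fn_mul_t ht.out, ← Fn_mul_t_mul ht.out]
  ring

lemma key (a b z : ℂ) (ha : 0 < a.re) (hz : 0 < z.re) :
    ∫ t in Ioi (0:ℝ), Fn a b z t * (a + b * t - z * (t * ((1:ℂ) + t))) = 0 := by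
  have h0 : ContinuousWithinAt (Fn (a+1) (b+2) z) (Ici 0) 0 := by
    rw [← Set.Ioi_insert, continuousWithinAt_insert_self]
    unfold ContinuousWithinAt
    rw [Fn_w_zero b z ha]
    exact w_tendsto_zero a b ha z
  have := integral_Ioi_of_hasDerivAt_of_tendsto h0
    (fun t ht => w_hasDerivAt a b z ht.out) (key_integrable b ha hz)
    (w_tendsto_atTop a b hz)
  rw [this, Fn_w_zero b z ha, sub_zero]

lemma J_decay (a0 b z : ℂ) (ha : 0 < a0.re) (hz : 0 < z.re) (θ : ℝ) :
    |θ| * ‖∫ t in Ioi (0:ℝ), Fn (a0 + Complex.I * θ) b z t‖ ≤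
      ‖a0‖ * (∫ t in Ioi (0:ℝ), rB a0.re (b.re - a0.re - 1) z.re t)
      + ‖b‖ * (∫ t in Ioi (0:ℝ), rB (a0.re + 1) (b.re - a0.re - 1) z.re t)
      + ‖z‖ * (∫ t in Ioi (0:ℝ), rB (a0.re + 1) (b.re - a0.re) z.re t) := by
  set a := a0 + Complex.I * θ with ha_def
  have hre : a.re = a0.re := by simp [ha_def]
  have ha' : 0 < a.re := by rw [hre]; exact ha
  have ha1 : 0 < (a+1).re := by simp only [Complex.add_re, Complex.one_re]; linarith
  have h1 := Fn_integrableOn (a := a) b ha' hz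
  have h2 := Fn_integrableOn (a := a+1) (b+1) ha1 hz
  have h3 := Fn_integrableOn (a := a+1) (b+2) ha1 hz
  have split : (0:ℂ) = (Complex.I * θ) * (∫ t in Ioi (0:ℝ), Fn a b z t)
      + (a0 * (∫ t in Ioi (0:ℝ), Fn a b z t)
        + b * (∫ t in Ioi (0:ℝ), Fn (a+1) (b+1) z t)
        - z * (∫ t in Ioi (0:ℝ), Fn (a+1) (b+2) z t)) := by
    rw [← key a b z ha' hz]
    calc ∫ t in Ioi (0:ℝ), Fn a b z t * (a + b * t - z * (t * ((1:ℂ) + t)))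
        = ∫ t in Ioi (0:ℝ), ((Complex.I * θ) * Fn a b z t
            + (a0 * Fn a b z t + b * Fn (a+1) (b+1) z t - z * Fn (a+1) (b+2) z t)) := by
          refine setIntegral_congr_fun measurableSet_Ioi (fun t ht => ?_)
          rw [← Fn_mul_t ht.out, ← Fn_mul_t_mul ht.out, ha_def]; ring
      _ = _ := by
          have hI12 : IntegrableOn (fun t : ℝ => a0 * Fn a b z t
              + b * Fn (a+1) (b+1) z t) (Ioi 0) := (h1.const_mul a0).add (h2.const_mul b)
          have hI123 : IntegrableOn (fun t : ℝ => a0 * Fn a b z t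
              + b * Fn (a+1) (b+1) z t - z * Fn (a+1) (b+2) z t) (Ioi 0) :=
            hI12.sub (h3.const_mul z)
          have hIθ : IntegrableOn (fun t : ℝ => (Complex.I * ↑θ) * Fn a b z t) (Ioi 0) :=
            h1.const_mul _
          rw [integral_add hIθ hI123, integral_sub hI12 (h3.const_mul z),
            integral_add (h1.const_mul a0) (h2.const_mul b),
            integral_const_mul, integral_const_mul, integral_const_mul, integral_const_mul]
  have hAeq : (Complex.I * θ) * (∫ t in Ioi (0:ℝ), Fn a b z t)
      = -(a0 * (∫ t in Ioi (0:ℝ), Fn a b z t)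
        + b * (∫ t in Ioi (0:ℝ), Fn (a+1) (b+1) z t)
        - z * (∫ t in Ioi (0:ℝ), Fn (a+1) (b+2) z t)) := by
    linear_combination -split
  have b1 : ‖∫ t in Ioi (0:ℝ), Fn a b z t‖
      ≤ ∫ t in Ioi (0:ℝ), rB a0.re (b.re - a0.re - 1) z.re t := by
    have := J_norm_le (a := a) b ha' hz; rwa [hre] at this
  have b2 : ‖∫ t in Ioi (0:ℝ), Fn (a+1) (b+1) z t‖
      ≤ ∫ t in Ioi (0:ℝ), rB (a0.re + 1) (b.re - a0.re - 1) z.re t := by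
    have h := J_norm_le (a := a+1) (b+1) ha1 hz
    have e1 : (a+1).re = a0.re + 1 := by simp [Complex.add_re, hre]
    rw [e1] at h
    have e2 : (b+1).re - (a0.re + 1) - 1 = b.re - a0.re - 1 := by
      simp only [Complex.add_re, Complex.one_re]; ring
    rwa [e2] at h
  have b3 : ‖∫ t in Ioi (0:ℝ), Fn (a+1) (b+2) z t‖
      ≤ ∫ t in Ioi (0:ℝ), rB (a0.re + 1) (b.re - a0.re) z.re t := by
    have h := J_norm_le (a := a+1) (b+2) ha1 hz
    have e1 : (a+1).re = a0.re + 1 := by simp [Complex.add_re, hre]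
    rw [e1] at h
    have e2 : (b+2).re - (a0.re + 1) - 1 = b.re - a0.re := by
      simp only [Complex.add_re, Complex.re_ofNat]; ring
    rwa [e2] at h
  have hnθ : |θ| * ‖∫ t in Ioi (0:ℝ), Fn a b z t‖
      = ‖(Complex.I * θ) * (∫ t in Ioi (0:ℝ), Fn a b z t)‖ := by
    rw [norm_mul, norm_mul, Complex.norm_I, one_mul, Complex.norm_real, Real.norm_eq_abs]
  rw [hnθ, hAeq, norm_neg]
  calc ‖a0 * (∫ t in Ioi (0:ℝ), Fn a b z t)
        + b * (∫ t in Ioi (0:ℝ), Fn (a+1) (b+1) z t)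
        - z * (∫ t in Ioi (0:ℝ), Fn (a+1) (b+2) z t)‖
      ≤ ‖a0‖ * ‖∫ t in Ioi (0:ℝ), Fn a b z t‖
        + ‖b‖ * ‖∫ t in Ioi (0:ℝ), Fn (a+1) (b+1) z t‖
        + ‖z‖ * ‖∫ t in Ioi (0:ℝ), Fn (a+1) (b+2) z t‖ := by
        refine (norm_sub_le _ _).trans ?_
        rw [← norm_mul, ← norm_mul, ← norm_mul]
        exact add_le_add_left (norm_add_le _ _) _
    _ ≤ _ :=
        add_le_add (add_le_add (mul_le_mul_of_nonneg_left b1 (norm_nonneg _))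
          (mul_le_mul_of_nonneg_left b2 (norm_nonneg _)))
          (mul_le_mul_of_nonneg_left b3 (norm_nonneg _))

lemma J_bound (a0 b z : ℂ) (ha : 0 < a0.re) (hz : 0 < z.re) (θ : ℝ) :
    ‖∫ t in Ioi (0:ℝ), Fn (a0 + Complex.I * θ) b z t‖
      ≤ ∫ t in Ioi (0:ℝ), rB a0.re (b.re - a0.re - 1) z.re t := by
  have hre : (a0 + Complex.I * (θ:ℂ)).re = a0.re := by simp
  have h := J_norm_le (a := a0 + Complex.I * θ) b (by rw [hre]; exact ha) hz
  rwa [hre] at h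

lemma master (a0 b z : ℂ) (ha : 0 < a0.re) (hz : 0 < z.re) :
    ∃ C M : ℝ, ∀ θ : ℝ, ‖∫ t in Ioi (0:ℝ), Fn (a0 + Complex.I * θ) b z t‖ ≤ C ∧
      |θ| * ‖∫ t in Ioi (0:ℝ), Fn (a0 + Complex.I * θ) b z t‖ ≤ M :=
  ⟨_, _, fun θ => ⟨J_bound a0 b z ha hz θ, J_decay a0 b z ha hz θ⟩⟩

lemma J_meas {g : ℝ → ℂ} (hg : Measurable g) (b z : ℂ) :
    StronglyMeasurable (fun τ : ℝ => ∫ t in Ioi (0:ℝ), Fn (g τ) b z t) := by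
  have hm : StronglyMeasurable (fun p : ℝ × ℝ => Fn (g p.1) b z p.2) := by
    apply Measurable.stronglyMeasurable
    refine Measurable.mul (Measurable.mul ?_ ?_) ?_
    · exact Complex.measurable_exp.comp
        (measurable_const.mul (Complex.measurable_ofReal.comp measurable_snd))
    · exact (Complex.measurable_ofReal.comp measurable_snd).pow
        ((hg.comp measurable_fst).sub measurable_const)
    · exact (measurable_const.add (Complex.measurable_ofReal.comp measurable_snd)).pow
        ((measurable_const.sub (hg.comp measurable_fst)).sub measurable_const)
  exact hm.integral_prod_right'

lemma Gamma_ne (a : ℂ) (ha : 0 < a.re) : Complex.Gamma a ≠ 0 := by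
  refine Complex.Gamma_ne_zero fun m h => ?_
  rw [h] at ha
  simp only [Complex.neg_re, Complex.natCast_re] at ha
  have := Nat.cast_nonneg (α := ℝ) m
  linarith

/-- Confluent hypergeometric function of the second kind via its Laplace-transform
representation, valid for `Re a > 0`, `Re z > 0` (principal branch powers). -/
noncomputable def hypU (a b z : ℂ) : ℂ :=
  (Complex.Gamma a)⁻¹ *
    ∫ t in Set.Ioi (0 : ℝ), Complex.exp (-z * t) * (t : ℂ) ^ (a - 1) * ((1 : ℂ) + t) ^ (b - a - 1)

/-- Convergence of the Magnus addition theorem: the integrand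
`τ ↦ Γ(c/2-σ-iτ) Γ(c/2+σ+iτ) U(c/2-σ-iτ,c,x) U(c/2+σ+iτ,c,y)` is Lebesgue
integrable on ℝ whenever `Re c > 0`, `Re x > 0`, `Re y > 0`, `|Re σ| < (Re c)/2`. -/
theorem magnus_integrand_integrable (c x y σ : ℂ) (hc : 0 < c.re) (hx : 0 < x.re)
    (hy : 0 < y.re) (hσ : |σ.re| < c.re / 2) :
    MeasureTheory.Integrable (fun τ : ℝ =>
      Complex.Gamma (c / 2 - (σ + Complex.I * τ)) *
      Complex.Gamma (c / 2 + (σ + Complex.I * τ)) *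
      hypU (c / 2 - (σ + Complex.I * τ)) c x *
      hypU (c / 2 + (σ + Complex.I * τ)) c y) := by
  obtain ⟨hσ1, hσ2⟩ := abs_lt.mp hσ
  have haX : 0 < (c/2 - σ).re := by simp [Complex.div_re, Complex.normSq]; linarith
  have haY : 0 < (c/2 + σ).re := by simp [Complex.div_re, Complex.normSq]; linarith
  have hreX : ∀ τ : ℝ, c/2 - (σ + Complex.I * τ) = (c/2 - σ) + Complex.I * ((-τ : ℝ) : ℂ) := by
    intro τ; push_cast; ring
  have hreY : ∀ τ : ℝ, c/2 + (σ + Complex.I * τ) = (c/2 + σ) + Complex.I * ((τ : ℝ) : ℂ) := by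
    intro τ; ring
  have hposX : ∀ τ : ℝ, 0 < (c/2 - (σ + Complex.I * τ)).re := by
    intro τ; simp [Complex.div_re, Complex.normSq]; linarith
  have hposY : ∀ τ : ℝ, 0 < (c/2 + (σ + Complex.I * τ)).re := by
    intro τ; simp [Complex.div_re, Complex.normSq]; linarith
  have key_eq : (fun τ : ℝ =>
      Complex.Gamma (c / 2 - (σ + Complex.I * τ)) *
      Complex.Gamma (c / 2 + (σ + Complex.I * τ)) *
      hypU (c / 2 - (σ + Complex.I * τ)) c x *
      hypU (c / 2 + (σ + Complex.I * τ)) c y)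
      = (fun τ : ℝ => (∫ t in Ioi (0:ℝ), Fn (c/2 - (σ + Complex.I * τ)) c x t)
          * (∫ t in Ioi (0:ℝ), Fn (c/2 + (σ + Complex.I * τ)) c y t)) := by
    funext τ
    have h1 := Gamma_ne _ (hposX τ)
    have h2 := Gamma_ne _ (hposY τ)
    have cancel : ∀ g1 g2 j1 j2 : ℂ, g1 ≠ 0 → g2 ≠ 0 →
        g1 * g2 * (g1⁻¹ * j1) * (g2⁻¹ * j2) = j1 * j2 := by
      intro g1 g2 j1 j2 n1 n2
      field_simp
    simp only [hypU, Fn]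
    exact cancel _ _ _ _ h1 h2
  rw [key_eq]
  obtain ⟨Cx, Mx, hX⟩ := master (c/2 - σ) c x haX hx
  obtain ⟨Cy, My, hY⟩ := master (c/2 + σ) c y haY hy
  have hCx : 0 ≤ Cx := (norm_nonneg _).trans (hX 0).1
  have hCy : 0 ≤ Cy := (norm_nonneg _).trans (hY 0).1
  have hMx : 0 ≤ Mx := le_trans (by positivity) (hX 0).2
  have hMy : 0 ≤ My := le_trans (by positivity) (hY 0).2
  have hmeas : AEStronglyMeasurable (fun τ : ℝ =>
      (∫ t in Ioi (0:ℝ), Fn (c/2 - (σ + Complex.I * τ)) c x t)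
        * (∫ t in Ioi (0:ℝ), Fn (c/2 + (σ + Complex.I * τ)) c y t)) volume := by
    have m1 : Measurable (fun τ : ℝ => c/2 - (σ + Complex.I * τ)) :=
      measurable_const.sub (measurable_const.add (measurable_const.mul Complex.measurable_ofReal))
    have m2 : Measurable (fun τ : ℝ => c/2 + (σ + Complex.I * τ)) :=
      measurable_const.add (measurable_const.add (measurable_const.mul Complex.measurable_ofReal))
    exact ((J_meas m1 c x).mul (J_meas m2 c y)).aestronglyMeasurable
  refine Integrable.mono' (integrable_inv_one_add_sq.const_mul (Cx * Cy + Mx * My)) hmeas ?_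
  refine Filter.Eventually.of_forall fun τ => ?_
  have e1 : ‖∫ t in Ioi (0:ℝ), Fn (c/2 - (σ + Complex.I * τ)) c x t‖ ≤ Cx := by
    rw [hreX τ]; exact (hX (-τ)).1
  have e2 : ‖∫ t in Ioi (0:ℝ), Fn (c/2 + (σ + Complex.I * τ)) c y t‖ ≤ Cy := by
    rw [hreY τ]; exact (hY τ).1
  have d1 : |τ| * ‖∫ t in Ioi (0:ℝ), Fn (c/2 - (σ + Complex.I * τ)) c x t‖ ≤ Mx := by
    rw [hreX τ, ← abs_neg τ]; exact (hX (-τ)).2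
  have d2 : |τ| * ‖∫ t in Ioi (0:ℝ), Fn (c/2 + (σ + Complex.I * τ)) c y t‖ ≤ My := by
    rw [hreY τ]; exact (hY τ).2
  rw [norm_mul]
  set u := ‖∫ t in Ioi (0:ℝ), Fn (c/2 - (σ + Complex.I * τ)) c x t‖ with hu
  set v := ‖∫ t in Ioi (0:ℝ), Fn (c/2 + (σ + Complex.I * τ)) c y t‖ with hv
  have hu0 : 0 ≤ u := norm_nonneg _
  have hv0 : 0 ≤ v := norm_nonneg _
  have hd : (0:ℝ) < 1 + τ^2 := by positivity
  rw [mul_comm (Cx * Cy + Mx * My), ← div_eq_inv_mul, le_div_iff₀ hd]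
  have p1 : u * v ≤ Cx * Cy := mul_le_mul e1 e2 hv0 hCx
  have p2 : (|τ| * u) * (|τ| * v) ≤ Mx * My :=
    mul_le_mul d1 d2 (by positivity) hMx
  have p3 : u * v * τ^2 ≤ Mx * My := by
    calc u * v * τ^2 = (|τ| * u) * (|τ| * v) := by
          rw [show (|τ| * u) * (|τ| * v) = |τ|^2 * (u*v) from by ring, _root_.sq_abs]; ring
      _ ≤ Mx * My := p2
  have expand : u * v * (1 + τ^2) = u * v + u * v * τ^2 := by ring
  rw [expand]
  linarith
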